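/- If for some iteration δ with 1 ≤ δ ≤ |F| the smoothed bootstrap-percolation values satisfy \bar π_j(δ) ≥ 0 for every follower j ∈ F, then the exact bootstrap-percolation process activates every follower by iteration δ, i.e., π_j(δ) = 1 for every j ∈ F. -/
import Mathlib


open scoped BigOperators

/-- The parametrized sigmoid function σ_{s,q}(y) = (1+q)/(1 + q⁻¹ e^{-s y}) − q. -/
noncomputable def sigmaFn (s q y : ℝ) : ℝ :=
  (1 + q) / (1 + q⁻¹ * Real.exp (-(s * y))) - q

/-- Smoothed adjacency entry: `σ_{s_A,q_A}((R² − Δ_{ij}²)³)` if `i ≠ j` and `Δ_{ij} < R`,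
and `0` otherwise. -/
noncomputable def barAdj (sA qA R : ℝ) {n m : ℕ} (p : Fin n → EuclideanSpace ℝ (Fin m))
    (i j : Fin n) : ℝ :=
  if i ≠ j ∧ dist (p i) (p j) < R then
    sigmaFn sA qA ((R ^ 2 - dist (p i) (p j) ^ 2) ^ 3)
  else 0

/-- Exact bootstrap-percolation values: leaders `j < l` start at `1`, followers start at `0`;
`π_j(k+1) = 1` iff `π_j(k) = 1` or the sum of `π_i(k)` over neighbors `i` of `j` is `≥ r`. -/
noncomputable def piExact (R : ℝ) {n m : ℕ} (p : Fin n → EuclideanSpace ℝ (Fin m))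
    (l r : ℕ) : ℕ → Fin n → ℝ
  | 0 => fun j => if (j : ℕ) < l then 1 else 0
  | k + 1 => fun j =>
      if piExact R p l r k j = 1 ∨
          (r : ℝ) ≤ ∑ i ∈ Finset.univ.filter (fun i => i ≠ j ∧ dist (p i) (p j) < R),
            piExact R p l r k i
      then 1 else 0

/-- Smoothed bootstrap-percolation values: leaders `j < l` are pinned at `1`; each follower
`j` updates via `σ_{s,q}(∑_i \bar a_{ij} ⋅ \bar π_i(k) − r)` (leaders contributing
`\bar a_{ij} ⋅ 1`). -/
noncomputable def piBar (s q sA qA R : ℝ) {n m : ℕ} (p : Fin n → EuclideanSpace ℝ (Fin m))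
    (l r : ℕ) : ℕ → Fin n → ℝ
  | 0 => fun j => if (j : ℕ) < l then 1 else 0
  | k + 1 => fun j =>
      if (j : ℕ) < l then 1
      else sigmaFn s q ((∑ i, barAdj sA qA R p i j * piBar s q sA qA R p l r k i) - r)

section Aux

variable {s q y : ℝ}

lemma sigma_denom_pos (hq : 0 < q) (y : ℝ) :
    0 < 1 + q⁻¹ * Real.exp (-(s * y)) := by
  have := mul_pos (inv_pos.mpr hq) (Real.exp_pos (-(s * y)))
  linarith

lemma sigma_nonneg_iff (hs : 0 < s) (hq : 0 < q) :
    0 ≤ sigmaFn s q y ↔ 0 ≤ y := by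
  unfold sigmaFn
  rw [sub_nonneg, le_div_iff₀ (sigma_denom_pos hq y)]
  have hq' : q ≠ 0 := ne_of_gt hq
  have : q * (1 + q⁻¹ * Real.exp (-(s * y))) = q + Real.exp (-(s * y)) := by
    field_simp
  rw [this]
  constructor
  · intro h
    have hE : Real.exp (-(s * y)) ≤ 1 := by linarith
    have := Real.exp_le_one_iff.mp hE
    nlinarith
  · intro h
    have : -(s * y) ≤ 0 := by nlinarith
    have := Real.exp_le_one_iff.mpr this
    linarith

lemma sigma_pos_iff (hs : 0 < s) (hq : 0 < q) :
    0 < sigmaFn s q y ↔ 0 < y := by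
  unfold sigmaFn
  rw [sub_pos, lt_div_iff₀ (sigma_denom_pos hq y)]
  have hq' : q ≠ 0 := ne_of_gt hq
  have : q * (1 + q⁻¹ * Real.exp (-(s * y))) = q + Real.exp (-(s * y)) := by
    field_simp
  rw [this]
  constructor
  · intro h
    have hE : Real.exp (-(s * y)) < 1 := by linarith
    have := Real.exp_lt_one_iff.mp hE
    nlinarith
  · intro h
    have : -(s * y) < 0 := by nlinarith
    have := Real.exp_lt_one_iff.mpr this
    linarith

lemma sigma_lt_one (hs : 0 < s) (hq : 0 < q) : sigmaFn s q y < 1 := by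
  unfold sigmaFn
  have hD : 0 < 1 + q⁻¹ * Real.exp (-(s * y)) := sigma_denom_pos hq y
  have h1 : (1 : ℝ) < 1 + q⁻¹ * Real.exp (-(s * y)) := by
    have := mul_pos (inv_pos.mpr hq) (Real.exp_pos (-(s * y)))
    linarith
  have : (1 + q) / (1 + q⁻¹ * Real.exp (-(s * y))) < 1 + q := by
    rw [div_lt_iff₀ hD]
    nlinarith
  linarith

variable {n m : ℕ} {sA qA R : ℝ} (p : Fin n → EuclideanSpace ℝ (Fin m))

lemma barAdj_nonneg (hsA : 0 < sA) (hqA : 0 < qA) (i j : Fin n) :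
    0 ≤ barAdj sA qA R p i j := by
  unfold barAdj
  split
  · rename_i h
    rw [sigma_nonneg_iff hsA hqA]
    have hd : 0 ≤ dist (p i) (p j) := dist_nonneg
    exact pow_nonneg (by nlinarith [h.2]) 3
  · exact le_rfl
lemma barAdj_lt_one (hsA : 0 < sA) (hqA : 0 < qA) (i j : Fin n) :
    barAdj sA qA R p i j < 1 := by
  unfold barAdj
  split
  · exact sigma_lt_one hsA hqA
  · norm_num

lemma barAdj_cond {i j : Fin n} (h : barAdj sA qA R p i j ≠ 0) :
    i ≠ j ∧ dist (p i) (p j) < R := by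
  by_contra hc
  exact h (if_neg hc)

lemma piBar_le_one (hs : 0 < s) (hq : 0 < q) (l r : ℕ) (k : ℕ) (j : Fin n) :
    piBar s q sA qA R p l r k j ≤ 1 := by
  cases k with
  | zero => unfold piBar; split <;> norm_num
  | succ k =>
      unfold piBar
      split
      · exact le_rfl
      · exact le_of_lt (sigma_lt_one hs hq)

lemma piExact_zero_or_one (R : ℝ) (l r : ℕ) (k : ℕ) (j : Fin n) :
    piExact R p l r k j = 0 ∨ piExact R p l r k j = 1 := by
  cases k with
  | zero => unfold piExact; split <;> simp
  | succ k => unfold piExact; split <;> simp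

lemma piExact_nonneg (R : ℝ) (l r : ℕ) (k : ℕ) (j : Fin n) :
    0 ≤ piExact R p l r k j := by
  rcases piExact_zero_or_one p R l r k j with h | h <;> rw [h] <;> norm_num

lemma piExact_leader (R : ℝ) (l r : ℕ) (k : ℕ) (j : Fin n) (hj : (j : ℕ) < l) :
    piExact R p l r k j = 1 := by
  induction k with
  | zero => unfold piExact; exact if_pos hj
  | succ k ih => unfold piExact; exact if_pos (Or.inl ih)

/-- Counting lemma: if the smoothed neighbor sum is at least `r` and the inductive
hypothesis relating `piBar` positivity to `piExact` activation holds at step `k`,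
then at least `r` exact-activated neighbors exist. -/
lemma counting (hs : 0 < s) (hq : 0 < q) (hsA : 0 < sA) (hqA : 0 < qA)
    (l r : ℕ) (hr : 0 < r) (k : ℕ) (j : Fin n)
    (hsum : (r : ℝ) ≤ ∑ i, barAdj sA qA R p i j * piBar s q sA qA R p l r k i)
    (IH : ∀ i : Fin n, 0 < piBar s q sA qA R p l r k i → piExact R p l r k i = 1) :
    (r : ℝ) ≤ ∑ i ∈ Finset.univ.filter (fun i => i ≠ j ∧ dist (p i) (p j) < R),
      piExact R p l r k i := by
  classical
  set f : Fin n → ℝ := fun i => barAdj sA qA R p i j * piBar s q sA qA R p l r k i with hf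
  set T : Finset (Fin n) := Finset.univ.filter (fun i => 0 < f i) with hT
  -- the full sum is at most the sum over T
  have hsplit : ∑ i ∈ T, f i + ∑ i ∈ Finset.univ.filter (fun i => ¬ 0 < f i), f i
      = ∑ i, f i := Finset.sum_filter_add_sum_filter_not _ _ _
  have hnonposs : ∑ i ∈ Finset.univ.filter (fun i => ¬ 0 < f i), f i ≤ 0 := by
    apply Finset.sum_nonpos
    intro i hi
    have := (Finset.mem_filter.mp hi).2
    linarith [not_lt.mp this]
  have hTsum : (r : ℝ) ≤ ∑ i ∈ T, f i := by
    have : (r : ℝ) ≤ ∑ i, f i := hsum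
    linarith
  -- T is nonempty
  have hTne : T.Nonempty := by
    rcases Finset.eq_empty_or_nonempty T with h | h
    · exfalso
      rw [h, Finset.sum_empty] at hTsum
      have : (0 : ℝ) < r := by exact_mod_cast hr
      linarith
    · exact h
  -- each term over T is < 1
  have hterm : ∀ i ∈ T, f i < 1 := by
    intro i hi
    have hb0 : 0 ≤ barAdj sA qA R p i j := barAdj_nonneg p hsA hqA i j
    have hb1 : barAdj sA qA R p i j < 1 := barAdj_lt_one p hsA hqA i j
    have hple : piBar s q sA qA R p l r k i ≤ 1 := piBar_le_one p hs hq l r k i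
    calc f i ≤ barAdj sA qA R p i j * 1 := by
          apply mul_le_mul_of_nonneg_left hple hb0
      _ = barAdj sA qA R p i j := mul_one _
      _ < 1 := hb1
  have hcard : ∑ i ∈ T, f i < (T.card : ℝ) := by
    calc ∑ i ∈ T, f i < ∑ i ∈ T, (1 : ℝ) :=
          Finset.sum_lt_sum_of_nonempty hTne hterm
      _ = (T.card : ℝ) := by simp
  -- members of T are activated neighbors
  have hmem : ∀ i ∈ T, (i ≠ j ∧ dist (p i) (p j) < R) ∧ piExact R p l r k i = 1 := by
    intro i hi
    have hfi : 0 < f i := (Finset.mem_filter.mp hi).2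
    have hb0 : 0 ≤ barAdj sA qA R p i j := barAdj_nonneg p hsA hqA i j
    have hbne : barAdj sA qA R p i j ≠ 0 := by
      intro h0
      rw [hf] at hfi
      simp only [h0, zero_mul] at hfi
      exact lt_irrefl 0 hfi
    have hbpos : 0 < barAdj sA qA R p i j := lt_of_le_of_ne hb0 (Ne.symm hbne)
    have hppos : 0 < piBar s q sA qA R p l r k i := by
      rcases mul_pos_iff.mp hfi with ⟨_, h⟩ | ⟨h, _⟩
      · exact h
      · linarith
    exact ⟨barAdj_cond p hbne, IH i hppos⟩
  have hsub : T ⊆ Finset.univ.filter (fun i => i ≠ j ∧ dist (p i) (p j) < R) := by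
    intro i hi
    exact Finset.mem_filter.mpr ⟨Finset.mem_univ i, (hmem i hi).1⟩
  have h1 : (T.card : ℝ) = ∑ i ∈ T, piExact R p l r k i := by
    rw [Finset.sum_congr rfl (fun i hi => (hmem i hi).2)]
    simp
  have h2 : ∑ i ∈ T, piExact R p l r k i
      ≤ ∑ i ∈ Finset.univ.filter (fun i => i ≠ j ∧ dist (p i) (p j) < R),
          piExact R p l r k i := by
    apply Finset.sum_le_sum_of_subset_of_nonneg hsub
    intro i _ _
    exact piExact_nonneg p R l r k i
  linarith

/-- Key lemma: strict positivity of `piBar` implies exact activation. -/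
lemma key (hs : 0 < s) (hq : 0 < q) (hsA : 0 < sA) (hqA : 0 < qA)
    (l r : ℕ) (hr : 0 < r) :
    ∀ (k : ℕ) (j : Fin n), 0 < piBar s q sA qA R p l r k j →
      piExact R p l r k j = 1 := by
  intro k
  induction k with
  | zero =>
      intro j hj
      unfold piBar at hj
      unfold piExact
      split at hj
      · rename_i h; exact if_pos h
      · exact absurd hj (lt_irrefl 0)
  | succ k ih =>
      intro j hj
      unfold piBar at hj
      split at hj
      · rename_i h; exact piExact_leader p R l r (k+1) j h
      · have hy : 0 < (∑ i, barAdj sA qA R p i j * piBar s q sA qA R p l r k i) - r :=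
          (sigma_pos_iff hs hq).mp hj
        have hsum : (r : ℝ) ≤ ∑ i, barAdj sA qA R p i j * piBar s q sA qA R p l r k i := by
          linarith
        have := counting p hs hq hsA hqA l r hr k j hsum ih
        unfold piExact
        exact if_pos (Or.inr this)

end Aux

theorem stmt_10 {n m : ℕ} (l r δ : ℕ) (hl : 0 < l) (hln : l ≤ n) (hr : 0 < r)
    (hδ1 : 1 ≤ δ) (hδf : δ ≤ n - l)
    (R s q sA qA : ℝ) (hR : 0 < R) (hs : 0 < s) (hq0 : 0 < q) (hq1 : q < 1)
    (hsA : 0 < sA) (hqA0 : 0 < qA) (hqA1 : qA < 1)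
    (p : Fin n → EuclideanSpace ℝ (Fin m))
    (hpos : ∀ j : Fin n, l ≤ (j : ℕ) → 0 ≤ piBar s q sA qA R p l r δ j) :
    ∀ j : Fin n, l ≤ (j : ℕ) → piExact R p l r δ j = 1 := by
  intro j hj
  obtain ⟨δ', rfl⟩ : ∃ δ', δ = δ' + 1 := ⟨δ - 1, (Nat.succ_pred_eq_of_pos hδ1).symm⟩
  have hnl : ¬ ((j : ℕ) < l) := not_lt.mpr hj
  have hpj := hpos j hj
  unfold piBar at hpj
  rw [if_neg hnl] at hpj
  have hy : 0 ≤ (∑ i, barAdj sA qA R p i j * piBar s q sA qA R p l r δ' i) - r :=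
    (sigma_nonneg_iff hs hq0).mp hpj
  have hsum : (r : ℝ) ≤ ∑ i, barAdj sA qA R p i j * piBar s q sA qA R p l r δ' i := by
    linarith
  have hc := counting p hs hq0 hsA hqA0 l r hr δ' j hsum
    (fun i hi => key p hs hq0 hsA hqA0 l r hr δ' i hi)
  unfold piExact
  exact if_pos (Or.inr hc)
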